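/- In G(Σ, e), the cyclic subgroup ⟨Ψ_t⟩ generated by Ψ_t is the internal direct sum ⟨3Ψ_t⟩ ⊕ ⟨mΨ_t⟩ of the cyclic subgroups generated by 3Ψ_t and by mΨ_t, where ⟨3Ψ_t⟩ has order m and ⟨mΨ_t⟩ has order 3. -/

import Mathlib

/-!
Since `0 = 6 ∑ Ψ_s = ∑ (6 / e(s)) e(s) Ψ_s = (∑ 6 / e(s)) · 3 Ψ_t = 3m Ψ_t`, the order of `Ψ_t`
divides `3m`; a character `G(Σ, e) → ℤ/6m` sending `Ψ_t` to `2` shows that it is exactly `3m`.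
As `3` and `m` are coprime, the cyclic group `⟨Ψ_t⟩ ≅ ℤ/3m` splits as `⟨3Ψ_t⟩ ⊕ ⟨mΨ_t⟩`.
-/

noncomputable def relSub {S : Type*} [Fintype S] (e : S → ℤ) : AddSubgroup (S →₀ ℤ) :=
  AddSubgroup.closure
    ({x | ∃ s t : S, x = Finsupp.single s (e s) - Finsupp.single t (e t)} ∪
      {∑ s : S, Finsupp.single s 1})

abbrev CompGrp {S : Type*} [Fintype S] (e : S → ℤ) : Type _ :=
  (S →₀ ℤ) ⧸ relSub e

noncomputable def Psi {S : Type*} [Fintype S] (e : S → ℤ) (s : S) : CompGrp e :=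
  QuotientAddGroup.mk (Finsupp.single s 1)

/-- `Σ = Σ₂ ⊔ Σ₄ ⊔ Σ₆` with `#Σ₂ = s₂` and `#Σ₄ = #Σ₆ = 2^ν`. -/
abbrev Sig4 (s₂ ν : ℕ) : Type := Fin s₂ ⊕ (Fin (2 ^ ν) ⊕ Fin (2 ^ ν))

def e4 (s₂ ν : ℕ) : Sig4 s₂ ν → ℤ :=
  Sum.elim (fun _ => 1) (Sum.elim (fun _ => 2) (fun _ => 3))

/-- `w i` (`1`-based): the `i`-th point of `Σ₄ = {w_1, …, w_{2^ν}}`. -/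
def wPt4 (s₂ ν : ℕ) (i : ℕ) : Sig4 s₂ ν :=
  Sum.inr (Sum.inl ⟨(i - 1) % 2 ^ ν, Nat.mod_lt _ (Nat.pow_pos (by norm_num))⟩)

/-- `t i` (`1`-based): the `i`-th point of `Σ₆ = {t_1, …, t_{2^ν}}`. -/
def tPt4 (s₂ ν : ℕ) (i : ℕ) : Sig4 s₂ ν :=
  Sum.inr (Sum.inr ⟨(i - 1) % 2 ^ ν, Nat.mod_lt _ (Nat.pow_pos (by norm_num))⟩)

/-- The generators `u_j` (`1`-based, `u_0 := Ψ w` with `w = w_{2^ν - 1}`):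
for `1 ≤ k ≤ 2^{ν-1} - 2`, `u_{2k-1} = Ψ w_{2k-1} - Ψ w` and
`u_{2k} = Ψ w_{2k-1} + Ψ w_{2k} - Ψ w - Ψ w'` (with `w' = w_{2^ν}`); and
`u_{2^ν-3} = Ψ w_{2^ν-3} - Ψ w` (the odd-index formula again),
`u_{2^ν-2} = Ψ w_{2^ν-3} - Ψ w_{2^ν-2}`. -/
noncomputable def uGen4 (s₂ ν : ℕ) : ℕ → CompGrp (e4 s₂ ν) := fun j =>
  if j = 0 then Psi (e4 s₂ ν) (wPt4 s₂ ν (2 ^ ν - 1))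
  else if j = 2 ^ ν - 2 then
    Psi (e4 s₂ ν) (wPt4 s₂ ν (2 ^ ν - 3)) - Psi (e4 s₂ ν) (wPt4 s₂ ν (2 ^ ν - 2))
  else if j % 2 = 1 then
    Psi (e4 s₂ ν) (wPt4 s₂ ν j) - Psi (e4 s₂ ν) (wPt4 s₂ ν (2 ^ ν - 1))
  else
    Psi (e4 s₂ ν) (wPt4 s₂ ν (j - 1)) + Psi (e4 s₂ ν) (wPt4 s₂ ν j)
      - Psi (e4 s₂ ν) (wPt4 s₂ ν (2 ^ ν - 1)) - Psi (e4 s₂ ν) (wPt4 s₂ ν (2 ^ ν))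

/-- The generators `v_j` (`1`-based): `v_{2k-1} = Ψ t_{2k-1} - Ψ t_{2k}` for
`1 ≤ k ≤ 2^{ν-1}` and `v_{2k} = Ψ t_{2k-1} + Ψ t_{2k} - Ψ t - Ψ t'` for
`1 ≤ k ≤ 2^{ν-1} - 1` (with `t = t_{2^ν - 1}`, `t' = t_{2^ν}`). -/
noncomputable def vGen4 (s₂ ν : ℕ) : ℕ → CompGrp (e4 s₂ ν) := fun j =>
  if j % 2 = 1 then
    Psi (e4 s₂ ν) (tPt4 s₂ ν j) - Psi (e4 s₂ ν) (tPt4 s₂ ν (j + 1))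
  else
    Psi (e4 s₂ ν) (tPt4 s₂ ν (j - 1)) + Psi (e4 s₂ ν) (tPt4 s₂ ν j)
      - Psi (e4 s₂ ν) (tPt4 s₂ ν (2 ^ ν - 1)) - Psi (e4 s₂ ν) (tPt4 s₂ ν (2 ^ ν))

section CyclicDecomposition

variable {G : Type*} [AddGroup G]

theorem zmultiples_nsmul_sup_zmultiples_nsmul {a b : ℕ} (hab : a.Coprime b) (x : G) :
    AddSubgroup.zmultiples (a • x) ⊔ AddSubgroup.zmultiples (b • x)
      = AddSubgroup.zmultiples x := by
  refine le_antisymm (sup_le ?_ ?_) ?_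
  · exact AddSubgroup.zmultiples_le.2 (AddSubgroup.nsmul_mem_zmultiples x a)
  · exact AddSubgroup.zmultiples_le.2 (AddSubgroup.nsmul_mem_zmultiples x b)
  obtain ⟨u, v, huv⟩ := Nat.isCoprime_iff_coprime.2 hab
  have hx : u • (a • x) + v • (b • x) = x := by
    rw [← natCast_zsmul, ← natCast_zsmul, smul_smul, smul_smul, ← add_zsmul, huv, one_zsmul]
  have hmem : u • (a • x) + v • (b • x) ∈
      AddSubgroup.zmultiples (a • x) ⊔ AddSubgroup.zmultiples (b • x) :=
    add_mem (AddSubgroup.mem_sup_left (zsmul_mem (AddSubgroup.mem_zmultiples _) u))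
      (AddSubgroup.mem_sup_right (zsmul_mem (AddSubgroup.mem_zmultiples _) v))
  rw [hx] at hmem
  exact AddSubgroup.zmultiples_le.2 hmem

theorem zmultiples_nsmul_inf_zmultiples_nsmul {a b : ℕ} (hab : a.Coprime b) {x : G}
    (hx : (a * b) • x = 0) :
    AddSubgroup.zmultiples (a • x) ⊓ AddSubgroup.zmultiples (b • x) = ⊥ := by
  have hkill : ∀ k : ℤ, ((a * b : ℕ) : ℤ) ∣ k → k • x = 0 := by
    rintro k ⟨l, rfl⟩
    rw [mul_comm, mul_zsmul, natCast_zsmul, hx, zsmul_zero]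
  rw [eq_bot_iff]
  rintro y ⟨⟨i, rfl⟩, ⟨j, hj⟩⟩
  simp only [← natCast_zsmul] at hj ⊢
  have hay : (a : ℤ) • i • (a : ℤ) • x = 0 := by
    rw [← hj, smul_smul, smul_smul]
    exact hkill _ ⟨j, by push_cast; ring⟩
  have hby : (b : ℤ) • i • (a : ℤ) • x = 0 := by
    rw [smul_smul, smul_smul]
    exact hkill _ ⟨i, by push_cast; ring⟩
  -- `y` is killed by `a` and by `b`, hence by `u a + v b = 1`.
  obtain ⟨u, v, huv⟩ := Nat.isCoprime_iff_coprime.2 hab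
  rw [AddSubgroup.mem_bot, ← one_zsmul (i • (a : ℤ) • x), ← huv, add_zsmul, mul_zsmul,
    mul_zsmul, hay, hby, zsmul_zero, zsmul_zero, add_zero]

theorem addOrderOf_nsmul_of_eq_mul {a b : ℕ} {x : G} (hx : addOrderOf x = a * b) (ha : a ≠ 0) :
    addOrderOf (a • x) = b := by
  rw [addOrderOf_nsmul_of_dvd ha ⟨b, hx⟩, hx, Nat.mul_div_cancel_left _ (Nat.pos_of_ne_zero ha)]

end CyclicDecomposition

namespace CompGrp

variable {S : Type*} [Fintype S] {e : S → ℤ}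

theorem zsmul_Psi_eq (s t : S) : e s • Psi e s = e t • Psi e t := by
  have hrel : Finsupp.single s (e s) - Finsupp.single t (e t) ∈ relSub e :=
    AddSubgroup.subset_closure (Or.inl ⟨s, t, rfl⟩)
  rw [← sub_eq_zero, Psi, Psi, ← QuotientAddGroup.mk_zsmul, ← QuotientAddGroup.mk_zsmul,
    ← QuotientAddGroup.mk_sub, QuotientAddGroup.eq_zero_iff]
  simpa only [Finsupp.smul_single, smul_eq_mul, mul_one] using hrel

theorem sum_Psi : ∑ s, Psi e s = 0 := by
  have hrel : ∑ s, Finsupp.single s 1 ∈ relSub e := AddSubgroup.subset_closure (Or.inr rfl)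
  simpa only [Psi, QuotientAddGroup.mk_sum] using (QuotientAddGroup.eq_zero_iff _).2 hrel

theorem zsmul_Psi_eq_zero {c : S → ℤ} {L : ℤ} (hc : ∀ s, c s * e s = L) (t : S) :
    ((∑ s, c s) * e t) • Psi e t = 0 :=
  calc ((∑ s, c s) * e t) • Psi e t = ∑ s, c s • e t • Psi e t := by
        rw [mul_zsmul]; exact Finset.sum_smul (R := ℤ) (M := CompGrp e)
    _ = ∑ s, L • Psi e s := by
        refine Finset.sum_congr rfl fun s _ => ?_
        rw [← zsmul_Psi_eq s t, smul_smul, hc]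
    _ = 0 := by rw [← Finset.smul_sum, sum_Psi, smul_zero]

variable {A : Type*} [AddCommGroup A]

noncomputable def lift (a : S → A) (ha : ∀ s t, e s • a s = e t • a t) (hsum : ∑ s, a s = 0) :
    CompGrp e →+ A :=
  QuotientAddGroup.lift (relSub e) (Finsupp.linearCombination ℤ a).toAddMonoidHom <| by
    rw [relSub, AddSubgroup.closure_le]
    rintro x (⟨s, t, rfl⟩ | rfl)
    · simp [ha s t]
    · simp [hsum]

theorem lift_Psi (a : S → A) (ha : ∀ s t, e s • a s = e t • a t) (hsum : ∑ s, a s = 0) (s : S) :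
    lift a ha hsum (Psi e s) = a s := by
  simp [lift, Psi]

end CompGrp

section Sig4

variable (s₂ ν : ℕ)

def m4 : ℕ := 6 * s₂ + 5 * 2 ^ ν

def sixDivE4 : Sig4 s₂ ν → ℤ :=
  Sum.elim (fun _ => 6) (Sum.elim (fun _ => 3) (fun _ => 2))

theorem sixDivE4_mul_e4 (s : Sig4 s₂ ν) : sixDivE4 s₂ ν s * e4 s₂ ν s = 6 := by
  rcases s with s | s | s <;> rfl

theorem sum_sixDivE4 : ∑ s, sixDivE4 s₂ ν s = m4 s₂ ν := by
  simp only [sixDivE4, m4, Fintype.sum_sum_type, Sum.elim_inl, Sum.elim_inr, Finset.sum_const,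
    Finset.card_univ, Fintype.card_fin, nsmul_eq_mul]
  push_cast
  ring

theorem addOrderOf_Psi_tPt4_dvd (i : ℕ) :
    addOrderOf (Psi (e4 s₂ ν) (tPt4 s₂ ν i)) ∣ 3 * m4 s₂ ν := by
  rw [← Int.natCast_dvd_natCast, addOrderOf_dvd_iff_zsmul_eq_zero]
  have h := CompGrp.zsmul_Psi_eq_zero (sixDivE4_mul_e4 s₂ ν) (tPt4 s₂ ν i)
  rw [sum_sixDivE4, show e4 s₂ ν (tPt4 s₂ ν i) = 3 from rfl, mul_comm] at h
  exact_mod_cast h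

/-- `Ψ_s ↦ 6 / e(s)`, corrected at `w'` and `t'` by elements of order `2` and `3` so that the
values sum to zero; `Ψ_t` then goes to `2`, of order `3m`. -/
def psiChar (s : Sig4 s₂ ν) : ZMod (6 * m4 s₂ ν) :=
  sixDivE4 s₂ ν s
    + (if s = wPt4 s₂ ν (2 ^ ν) then 3 * (m4 s₂ ν : ZMod (6 * m4 s₂ ν)) else 0)
    + (if s = tPt4 s₂ ν (2 ^ ν) then 2 * (m4 s₂ ν : ZMod (6 * m4 s₂ ν)) else 0)

theorem e4_zsmul_psiChar (s : Sig4 s₂ ν) : e4 s₂ ν s • psiChar s₂ ν s = 6 := by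
  have h6m : ((6 * m4 s₂ ν : ℕ) : ZMod (6 * m4 s₂ ν)) = 0 := ZMod.natCast_self _
  push_cast at h6m
  have hcoef : (e4 s₂ ν s : ZMod (6 * m4 s₂ ν)) * sixDivE4 s₂ ν s = 6 := by
    rw [← Int.cast_mul, mul_comm (e4 s₂ ν s), sixDivE4_mul_e4, Int.cast_ofNat]
  have hcorr : ∀ p (c : ZMod (6 * m4 s₂ ν)), (e4 s₂ ν p : ZMod (6 * m4 s₂ ν)) * c = 0 →
      (e4 s₂ ν s : ZMod (6 * m4 s₂ ν)) * (if s = p then c else 0) = 0 := by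
    rintro p c hp
    split_ifs with h
    · rw [h, hp]
    · rw [mul_zero]
  have hw := hcorr (wPt4 s₂ ν (2 ^ ν)) (3 * m4 s₂ ν) <| by
    rw [show e4 s₂ ν (wPt4 s₂ ν (2 ^ ν)) = 2 from rfl]
    push_cast
    linear_combination h6m
  have ht := hcorr (tPt4 s₂ ν (2 ^ ν)) (2 * m4 s₂ ν) <| by
    rw [show e4 s₂ ν (tPt4 s₂ ν (2 ^ ν)) = 3 from rfl]
    push_cast
    linear_combination h6m
  rw [zsmul_eq_mul, psiChar, mul_add, mul_add, hcoef, hw, ht, add_zero, add_zero]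

theorem sum_psiChar : ∑ s, psiChar s₂ ν s = 0 := by
  have h6m : ((6 * m4 s₂ ν : ℕ) : ZMod (6 * m4 s₂ ν)) = 0 := ZMod.natCast_self _
  simp only [psiChar, Finset.sum_add_distrib, Fintype.sum_ite_eq', ← Int.cast_sum, sum_sixDivE4]
  push_cast at h6m ⊢
  linear_combination h6m

theorem psiChar_tPt4 (hν : 1 ≤ ν) : psiChar s₂ ν (tPt4 s₂ ν (2 ^ ν - 1)) = 2 := by
  have h2 : 2 ≤ 2 ^ ν := Nat.le_self_pow (by omega) 2
  have hne : tPt4 s₂ ν (2 ^ ν - 1) ≠ tPt4 s₂ ν (2 ^ ν) := by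
    simp only [tPt4, ne_eq, Sum.inr.injEq, Fin.mk.injEq]
    rw [Nat.mod_eq_of_lt (by omega), Nat.mod_eq_of_lt (by omega)]
    omega
  rw [psiChar, if_neg (by simp [tPt4, wPt4]), if_neg hne, add_zero, add_zero,
    show sixDivE4 s₂ ν (tPt4 s₂ ν (2 ^ ν - 1)) = 2 from rfl, Int.cast_ofNat]

theorem addOrderOf_Psi_tPt4 (hν : 1 ≤ ν) :
    addOrderOf (Psi (e4 s₂ ν) (tPt4 s₂ ν (2 ^ ν - 1))) = 3 * m4 s₂ ν := by
  refine Nat.dvd_antisymm (addOrderOf_Psi_tPt4_dvd s₂ ν _) ?_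
  have hm : m4 s₂ ν ≠ 0 := by unfold m4; positivity
  have horder : addOrderOf (2 : ZMod (6 * m4 s₂ ν)) = 3 * m4 s₂ ν := by
    rw [← Nat.cast_two, ZMod.addOrderOf_coe _ (by omega), Nat.gcd_eq_right ⟨3 * m4 s₂ ν, by ring⟩]
    omega
  let φ := CompGrp.lift (psiChar s₂ ν) (fun s t => by rw [e4_zsmul_psiChar, e4_zsmul_psiChar])
    (sum_psiChar s₂ ν)
  have hφ : φ (Psi (e4 s₂ ν) (tPt4 s₂ ν (2 ^ ν - 1))) = 2 := by
    rw [CompGrp.lift_Psi, psiChar_tPt4 s₂ ν hν]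
  rw [← horder, ← hφ]
  exact addOrderOf_map_dvd φ _

theorem coprime_three_m4 : Nat.Coprime 3 (m4 s₂ ν) := by
  rw [m4, show 6 * s₂ + 5 * 2 ^ ν = 5 * 2 ^ ν + 3 * (2 * s₂) by ring,
    Nat.coprime_add_mul_left_right]
  exact Nat.Coprime.mul_right (by norm_num) (Nat.Coprime.pow_right _ (by norm_num))

end Sig4

/-- in `G(Σ, e)` the cyclic subgroup `⟨Ψ t⟩` (with `t = t_{2^ν - 1}`)
is the internal direct sum `⟨3Ψ t⟩ ⊕ ⟨mΨ t⟩` (`m = 6s₂ + 5·2^ν`): the two subgroups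
intersect trivially, their sup is `⟨Ψ t⟩`, `⟨3Ψ t⟩` has order `m` and `⟨mΨ t⟩` has
order `3`. -/
theorem stmt16 (s₂ ν : ℕ) (hν : 1 ≤ ν) :
    AddSubgroup.zmultiples ((3 : ℕ) • Psi (e4 s₂ ν) (tPt4 s₂ ν (2 ^ ν - 1))) ⊔
      AddSubgroup.zmultiples ((6 * s₂ + 5 * 2 ^ ν) • Psi (e4 s₂ ν) (tPt4 s₂ ν (2 ^ ν - 1)))
      = AddSubgroup.zmultiples (Psi (e4 s₂ ν) (tPt4 s₂ ν (2 ^ ν - 1))) ∧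
    AddSubgroup.zmultiples ((3 : ℕ) • Psi (e4 s₂ ν) (tPt4 s₂ ν (2 ^ ν - 1))) ⊓
      AddSubgroup.zmultiples ((6 * s₂ + 5 * 2 ^ ν) • Psi (e4 s₂ ν) (tPt4 s₂ ν (2 ^ ν - 1)))
      = ⊥ ∧
    Nat.card (AddSubgroup.zmultiples ((3 : ℕ) • Psi (e4 s₂ ν) (tPt4 s₂ ν (2 ^ ν - 1))))
      = 6 * s₂ + 5 * 2 ^ ν ∧
    Nat.card (AddSubgroup.zmultiples
      ((6 * s₂ + 5 * 2 ^ ν) • Psi (e4 s₂ ν) (tPt4 s₂ ν (2 ^ ν - 1)))) = 3 := by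
  have hx : addOrderOf (Psi (e4 s₂ ν) (tPt4 s₂ ν (2 ^ ν - 1))) = 3 * (6 * s₂ + 5 * 2 ^ ν) :=
    addOrderOf_Psi_tPt4 s₂ ν hν
  have hcop : Nat.Coprime 3 (6 * s₂ + 5 * 2 ^ ν) := coprime_three_m4 s₂ ν
  refine ⟨zmultiples_nsmul_sup_zmultiples_nsmul hcop _,
    zmultiples_nsmul_inf_zmultiples_nsmul hcop (hx ▸ addOrderOf_nsmul_eq_zero _), ?_, ?_⟩
  · rw [Nat.card_zmultiples, addOrderOf_nsmul_of_eq_mul hx three_ne_zero]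
  · rw [Nat.card_zmultiples, addOrderOf_nsmul_of_eq_mul (hx.trans (mul_comm _ _)) (by positivity)]
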